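/- Let p, q be coprime positive integers, μ ∈ ℂ* with pp' - qq' = 1, 0 ≤ q' < p, 0 < p' ≤ q. The Newton map σ: ℂ[[x,y]] → ℂ[[x₁,y₁]], f(x,y) ↦ f(μ^{q'}x₁^p, x₁^q(y₁+μ^{p'})), is an injective ring homomorphism. -/

import Mathlib

/-!
Since `p, q ≥ 1`, the series `μ^{q'} x^p` and `x^q (y + μ^{p'})` have zero constant term, so
`f ↦ f(μ^{q'} x^p, x^q (y + μ^{p'}))` is Mathlib's substitution homomorphism `MvPowerSeries.subst`;
expanding `(μ^{q'} x^p)^α (x^q (y + μ^{p'}))^β` by the binomial theorem gives exactly the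
coefficient formula of `newtonSubst`, so σ is a ring homomorphism.

For injectivity, fix a weight `a = pα + qβ` at which `f` has a nonzero coefficient and take the
one with the largest `β`. In the coefficient of `x^a y^β` in `σ(f)`, the terms with smaller `β'`
carry `C(β', β) = 0` and the larger ones vanish by maximality, so only `c_{αβ}` times a power of
`μ` survives.
-/

open MvPowerSeries Finsupp

/-- The Newton map σ = σ_{(p,q,μ)} : ℂ[[x,y]] → ℂ[[x₁,y₁]], f(x,y) ↦
f(μ^{q'} x₁^p, x₁^q(y₁ + μ^{p'})), written coefficientwise: the coefficient of
x₁^a y₁^b in σ(f) is ∑_{pα+qβ=a} c_{αβ} μ^{q'α+p'β} μ^{-p'b} C(β,b).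
(This agrees with the substitution when p, q ≥ 1 and μ ≠ 0.) -/
noncomputable def newtonSubst (p q p' q' : ℕ) (μ : ℂ)
    (f : MvPowerSeries (Fin 2) ℂ) : MvPowerSeries (Fin 2) ℂ :=
  fun e =>
    ∑ αβ ∈ (Finset.range (e 0 + 1) ×ˢ Finset.range (e 0 + 1)).filter
        (fun αβ => p * αβ.1 + q * αβ.2 = e 0),
      MvPowerSeries.coeff (R := ℂ) (single 0 αβ.1 + single 1 αβ.2) f *
        μ ^ (q' * αβ.1 + p' * αβ.2) * μ⁻¹ ^ (p' * e 1) * (αβ.2.choose (e 1) : ℂ)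

namespace NewtonMap

lemma eq_single_one_iff (e : Fin 2 →₀ ℕ) (m : ℕ) : e = single 1 m ↔ e 0 = 0 ∧ e 1 = m := by
  rw [Finsupp.ext_iff, Fin.forall_fin_two]
  simp

@[simp]
lemma single_add_single_apply_zero (a b : ℕ) :
    (single (0 : Fin 2) a + single 1 b : Fin 2 →₀ ℕ) 0 = a := by
  simp

@[simp]
lemma single_add_single_apply_one (a b : ℕ) :
    (single (0 : Fin 2) a + single 1 b : Fin 2 →₀ ℕ) 1 = b := by
  simp

lemma eq_single_add_single (d : Fin 2 →₀ ℕ) : d = single 0 (d 0) + single 1 (d 1) := by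
  ext i
  fin_cases i <;> simp

section Family

variable {R : Type*} [CommRing R]

lemma monomial_single_eq_C_mul_X_pow {σ : Type*} (i : σ) (n : ℕ) (a : R) :
    monomial (single i n) a = C a * X i ^ n := by
  rw [X_pow_eq, ← monomial_zero_eq_C_apply, monomial_mul_monomial, zero_add, mul_one]

lemma coeff_X_one_add_C_pow (c : R) (β : ℕ) (e : Fin 2 →₀ ℕ) :
    coeff e ((X 1 + C c : MvPowerSeries (Fin 2) R) ^ β) =
      if e 0 = 0 then c ^ (β - e 1) * β.choose (e 1) else 0 := by
  simp only [add_pow, map_sum, ← map_pow, ← map_natCast (C (σ := Fin 2)), coeff_mul_C, X_pow_eq,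
    coeff_monomial, eq_single_one_iff]
  split_ifs with h
  · simp +contextual [h, Nat.choose_eq_zero_of_lt]
  · simp [h]

noncomputable def newtonFamily (p q : ℕ) (c₀ c₁ : R) : Fin 2 → MvPowerSeries (Fin 2) R :=
  ![C c₀ * X 0 ^ p, X 0 ^ q * (X 1 + C c₁)]

lemma hasSubst_newtonFamily {p q : ℕ} (hp : 0 < p) (hq : 0 < q) (c₀ c₁ : R) :
    HasSubst (newtonFamily p q c₀ c₁) :=
  hasSubst_of_constantCoeff_zero (by simp [newtonFamily, Fin.forall_fin_two, hp.ne', hq.ne'])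

lemma coeff_newtonFamily_pow_mul_pow (p q : ℕ) (c₀ c₁ : R) (α β : ℕ) (e : Fin 2 →₀ ℕ) :
    coeff e (newtonFamily p q c₀ c₁ 0 ^ α * newtonFamily p q c₀ c₁ 1 ^ β) =
      if p * α + q * β = e 0 then c₀ ^ α * (c₁ ^ (β - e 1) * β.choose (e 1)) else 0 := by
  have hmon : newtonFamily p q c₀ c₁ 0 ^ α * newtonFamily p q c₀ c₁ 1 ^ β =
      monomial (single 0 (p * α + q * β)) (c₀ ^ α) * (X 1 + C c₁) ^ β := by
    simp only [newtonFamily, Matrix.cons_val_zero, Matrix.cons_val_one]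
    rw [monomial_single_eq_C_mul_X_pow, mul_pow, mul_pow, ← map_pow, ← pow_mul, ← pow_mul,
      pow_add]
    ring
  rw [hmon, coeff_monomial_mul, coeff_X_one_add_C_pow]
  simp only [single_le_iff, tsub_apply, single_eq_same]
  rw [single_eq_of_ne (by decide), tsub_zero]
  split_ifs <;> first | rfl | omega | exact mul_zero _

lemma coeff_prod_newtonFamily (p q : ℕ) (c₀ c₁ : R) (d e : Fin 2 →₀ ℕ) :
    coeff e (d.prod fun s n => newtonFamily p q c₀ c₁ s ^ n) =
      if p * d 0 + q * d 1 = e 0 then c₀ ^ d 0 * (c₁ ^ (d 1 - e 1) * (d 1).choose (e 1))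
      else 0 := by
  rw [Finsupp.prod_fintype _ _ fun _ => pow_zero _, Fin.prod_univ_two]
  exact coeff_newtonFamily_pow_mul_pow p q c₀ c₁ (d 0) (d 1) e

end Family

def weightSlice (p q a : ℕ) : Finset (ℕ × ℕ) :=
  (Finset.range (a + 1) ×ˢ Finset.range (a + 1)).filter fun x => p * x.1 + q * x.2 = a

lemma mem_weightSlice {p q a : ℕ} (hp : 0 < p) (hq : 0 < q) {x : ℕ × ℕ} :
    x ∈ weightSlice p q a ↔ p * x.1 + q * x.2 = a := by
  simp only [weightSlice, Finset.mem_filter, Finset.mem_product, Finset.mem_range]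
  refine ⟨And.right, fun h => ⟨⟨?_, ?_⟩, h⟩⟩ <;> nlinarith

lemma pow_mul_tsub_mul_choose {K : Type*} [Field K] {μ : K} (hμ : μ ≠ 0) (n β b : ℕ) :
    μ ^ (n * (β - b)) * β.choose b = μ ^ (n * β) * μ⁻¹ ^ (n * b) * β.choose b := by
  rcases le_or_gt b β with h | h
  · have hsplit : μ ^ (n * β) = μ ^ (n * (β - b)) * μ ^ (n * b) := by
      rw [← pow_add, ← mul_add, Nat.sub_add_cancel h]
    rw [hsplit, inv_pow, mul_assoc (μ ^ _), mul_inv_cancel₀ (pow_ne_zero _ hμ), mul_one]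
  · simp [Nat.choose_eq_zero_of_lt h]

variable {p q p' q' : ℕ} {μ : ℂ}

lemma coeff_newtonSubst (f : MvPowerSeries (Fin 2) ℂ) (e : Fin 2 →₀ ℕ) :
    coeff e (newtonSubst p q p' q' μ f) =
      ∑ x ∈ weightSlice p q (e 0), coeff (single 0 x.1 + single 1 x.2) f *
        μ ^ (q' * x.1 + p' * x.2) * μ⁻¹ ^ (p' * e 1) * (x.2.choose (e 1) : ℂ) := rfl

lemma newtonSubst_eq_subst (hp : 0 < p) (hq : 0 < q) (hμ : μ ≠ 0) (f : MvPowerSeries (Fin 2) ℂ) :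
    newtonSubst p q p' q' μ f = subst (newtonFamily p q (μ ^ q') (μ ^ p')) f := by
  ext e
  rw [coeff_subst (hasSubst_newtonFamily hp hq _ _)]
  simp only [coeff_prod_newtonFamily, smul_eq_mul, mul_ite, mul_zero]
  rw [finsum_eq_sum_of_support_subset _ (s := (weightSlice p q (e 0)).image
    fun x => single 0 x.1 + single 1 x.2)]
  · rw [Finset.sum_image]
    · rw [coeff_newtonSubst]
      refine Finset.sum_congr rfl fun x hx => ?_
      rw [single_add_single_apply_zero, single_add_single_apply_one,
        if_pos ((mem_weightSlice hp hq).1 hx), ← pow_mul, ← pow_mul,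
        pow_mul_tsub_mul_choose hμ, pow_add]
      ring
    · intro x _ y _ h
      exact Prod.ext (by simpa using congrArg (· 0) h) (by simpa using congrArg (· 1) h)
  · intro d hd
    have hw : p * d 0 + q * d 1 = e 0 := by
      by_contra h
      exact hd (if_neg h)
    exact Finset.mem_image.2
      ⟨(d 0, d 1), (mem_weightSlice hp hq).2 hw, (eq_single_add_single d).symm⟩

lemma eq_zero_of_newtonSubst_eq_zero (hp : 0 < p) (hq : 0 < q) (hμ : μ ≠ 0)
    {f : MvPowerSeries (Fin 2) ℂ} (h : newtonSubst p q p' q' μ f = 0) : f = 0 := by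
  by_contra hf
  obtain ⟨d, hd⟩ := (ne_zero_iff_exists_coeff_ne_zero f).1 hf
  set a := p * d 0 + q * d 1
  set S := (weightSlice p q a).filter fun x => coeff (single 0 x.1 + single 1 x.2) f ≠ 0
  have hdS : (d 0, d 1) ∈ S :=
    Finset.mem_filter.2 ⟨(mem_weightSlice hp hq).2 rfl, by rwa [← eq_single_add_single]⟩
  obtain ⟨x, hxS, hmax⟩ := S.exists_max_image Prod.snd ⟨_, hdS⟩
  obtain ⟨hxa, hx⟩ := Finset.mem_filter.1 hxS
  have hlead : coeff (single 0 a + single 1 x.2) (newtonSubst p q p' q' μ f) =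
      coeff (single 0 x.1 + single 1 x.2) f * μ ^ (q' * x.1 + p' * x.2) * μ⁻¹ ^ (p' * x.2) := by
    rw [coeff_newtonSubst, single_add_single_apply_zero, single_add_single_apply_one,
      Finset.sum_eq_single x]
    · rw [Nat.choose_self, Nat.cast_one, mul_one]
    · intro y hy hyx
      rcases lt_trichotomy y.2 x.2 with hlt | heq | hgt
      · rw [Nat.choose_eq_zero_of_lt hlt, Nat.cast_zero, mul_zero]
      · have hya := (mem_weightSlice hp hq).1 hy
        rw [heq, ← (mem_weightSlice hp hq).1 hxa] at hya
        have h1 : y.1 = x.1 := Nat.eq_of_mul_eq_mul_left hp (by omega)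
        exact absurd (Prod.ext h1 heq) hyx
      · have hyS : y ∉ S := fun hyS => (hmax y hyS).not_gt hgt
        rw [Finset.mem_filter, not_and_not_right] at hyS
        rw [hyS hy, zero_mul, zero_mul, zero_mul]
    · exact fun hx' => absurd hxa hx'
  rw [h, map_zero] at hlead
  exact mul_ne_zero (mul_ne_zero hx (pow_ne_zero _ hμ)) (pow_ne_zero _ (inv_ne_zero hμ))
    hlead.symm

end NewtonMap

open NewtonMap

theorem stmt_19_general (p q p' q' : ℕ) (hp : 1 ≤ p) (hq : 1 ≤ q)
    (μ : ℂ) (hμ : μ ≠ 0) :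
    (∀ f g : MvPowerSeries (Fin 2) ℂ,
      newtonSubst p q p' q' μ (f + g) =
        newtonSubst p q p' q' μ f + newtonSubst p q p' q' μ g) ∧
    (∀ f g : MvPowerSeries (Fin 2) ℂ,
      newtonSubst p q p' q' μ (f * g) =
        newtonSubst p q p' q' μ f * newtonSubst p q p' q' μ g) ∧
    newtonSubst p q p' q' μ 1 = 1 ∧
    Function.Injective (newtonSubst p q p' q' μ) := by
  have ha := hasSubst_newtonFamily hp hq (μ ^ q') (μ ^ p')
  have hσ : newtonSubst p q p' q' μ = substAlgHom ha :=
    (funext (newtonSubst_eq_subst hp hq hμ)).trans (coe_substAlgHom ha).symm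
  rw [hσ]
  exact ⟨map_add _, map_mul _, map_one _, (injective_iff_map_eq_zero _).2 fun f hf =>
    eq_zero_of_newtonSubst_eq_zero hp hq hμ (hσ ▸ hf)⟩

/-- Definition 2.1 / Statement 19: the Newton map σ_{(p,q,μ)} (p, q coprime positive,
pp' - qq' = 1 with 0 < p' ≤ q, 0 ≤ q' < p, μ ∈ ℂ*) is an injective ring
homomorphism ℂ[[x,y]] → ℂ[[x₁,y₁]]: it is additive, multiplicative, unital, and
σ(f) = 0 implies f = 0. -/
theorem stmt_19 (p q p' q' : ℕ) (hp : 1 ≤ p) (hq : 1 ≤ q)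
    (hcop : Nat.Coprime p q) (hp'₀ : 1 ≤ p') (hp' : p' ≤ q) (hq' : q' < p)
    (hB : p * p' = q * q' + 1) (μ : ℂ) (hμ : μ ≠ 0) :
    (∀ f g : MvPowerSeries (Fin 2) ℂ,
      newtonSubst p q p' q' μ (f + g) =
        newtonSubst p q p' q' μ f + newtonSubst p q p' q' μ g) ∧
    (∀ f g : MvPowerSeries (Fin 2) ℂ,
      newtonSubst p q p' q' μ (f * g) =
        newtonSubst p q p' q' μ f * newtonSubst p q p' q' μ g) ∧
    newtonSubst p q p' q' μ 1 = 1 ∧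
    Function.Injective (newtonSubst p q p' q' μ) :=
  stmt_19_general p q p' q' hp hq μ hμ
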